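/- arXiv:2310.08018 — 2 statements merged into one kernel-verified Lean document; each statement's English description precedes it below -/
import Mathlib

section
/- Define constants C(m₁,...,mₙ) ∈ ℂ for sequences of nonnegative integers recursively by C(m₁, m₂,...,mₙ) = (δ_{mₙ,0} - δ_{m₁≥1}) · C(m₂,...,m_{n-1}, mₙ + m₁) for n ≥ 2, with C of a single-entry sequence equal to 1, where δ_{m,0} = 1 if m = 0 else 0, and δ_{m≥1} = 1 if m ≥ 1 else 0. Then for all n ≥ 2: if mₙ = 0 then C(m₁,...,mₙ) = ∏_{k=1}^{n-1} δ_{m_k,0}, and if mₙ ≥ 1 then C(m₁,...,mₙ) = ∏_{k=1}^{n-1}(δ_{m_k,0} - 1). -/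
/-- Closed form for the recursion
`C(m₁,…,mₙ) = (δ_{mₙ,0} - δ_{m₁≥1}) · C(m₂,…,m_{n-1}, mₙ + m₁)` (n ≥ 2),
`C(m) = 1` for single-entry sequences: if `mₙ = 0` then
`C(m₁,…,mₙ) = ∏_{k=1}^{n-1} δ_{m_k,0}` and if `mₙ ≥ 1` then
`C(m₁,…,mₙ) = ∏_{k=1}^{n-1} (δ_{m_k,0} - 1)`. -/
theorem loop_recursion_closed_form (C : List ℕ → ℂ)
    (hbase : ∀ m : ℕ, C [m] = 1)
    (hrec : ∀ (m₁ : ℕ) (l : List ℕ) (mN : ℕ),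
      C (m₁ :: (l ++ [mN]))
        = ((if mN = 0 then (1 : ℂ) else 0) - (if 1 ≤ m₁ then (1 : ℂ) else 0))
            * C (l ++ [mN + m₁])) :
    ∀ (l : List ℕ) (mN : ℕ), l ≠ [] →
      C (l ++ [mN]) =
        if mN = 0 then (l.map (fun m => if m = 0 then (1 : ℂ) else 0)).prod
        else (l.map (fun m => (if m = 0 then (1 : ℂ) else 0) - 1)).prod := by
  intro l
  induction l with
  | nil => intro mN h; exact absurd rfl h
  | cons m₁ l ih =>
    intro mN _
    rcases eq_or_ne l [] with rfl | hl
    · have h := hrec m₁ [] mN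
      simp only [List.nil_append] at h
      show C [m₁, mN] = _
      rw [h, hbase]
      by_cases h1 : mN = 0 <;> by_cases h2 : m₁ = 0 <;>
        simp [h1, h2, Nat.one_le_iff_ne_zero]
    · have h := hrec m₁ l mN
      rw [List.cons_append, h, ih (mN + m₁) hl]
      by_cases h1 : mN = 0 <;> by_cases h2 : m₁ = 0 <;>
        simp [h1, h2, Nat.one_le_iff_ne_zero]
end

section
/- Fay's trisecant identity for the Kronecker theta function: let θ be the odd Jacobi theta function normalized so that θ'(0) = 1, and define S_c(z) = θ(z+c)/(θ(z)θ(c)). Then for generic a, b, x, y one has S_a(x)·S_b(y) = S_a(x-y)·S_{a+b}(y) + S_{a+b}(x)·S_b(y-x). -/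
/-!
Fix `a, b, y` and clear denominators: the identity becomes `F(x) = 0` for an entire `F` built from
products `θ(x + s) θ(x + t)` with `s + t = a - y`. Each such product is `1`-periodic and has the
same automorphy factor under `x ↦ x + τ` as `G(x) = θ(x + a - y) θ(x)`. By this transformation
law, `F(0) = F(y - a) = 0` forces `F` to vanish on all zeros `Λ ∪ (y - a + Λ)` of `G`; when
`θ(a - y) ≠ 0` these zeros are simple, so `F / G` is an entire elliptic function, hence constant
by Liouville, and the constant is `0` because `F(y) = 0 ≠ G(y)`. The condition `θ(a - y) ≠ 0`
is removed by continuity in `a`.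
-/

open Complex

/-- The Kronecker theta function `S_c(z) = θ(z+c)/(θ(z)θ(c))`. -/
noncomputable def kroneckerS (θ : ℂ → ℂ) (c z : ℂ) : ℂ := θ (z + c) / (θ z * θ c)

open Filter Function Set Topology

namespace PeriodPair

variable (L : PeriodPair)

lemma periodic_of_mem_lattice {α : Type*} {f : ℂ → α} (h₁ : Periodic f L.ω₁)
    (h₂ : Periodic f L.ω₂) {w : ℂ} (hw : w ∈ L.lattice) : Periodic f w := by
  obtain ⟨m, n, rfl⟩ := mem_lattice.mp hw
  exact (h₁.int_mul m).add_period (h₂.int_mul n)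

lemma isCompact_range_of_periodic {F : Type*} [TopologicalSpace F] {f : ℂ → F}
    (hf : Continuous f) (h₁ : Periodic f L.ω₁) (h₂ : Periodic f L.ω₂) :
    IsCompact (range f) :=
  IsZLattice.isCompact_range_of_periodic L.lattice f hf
    fun z _ hw => L.periodic_of_mem_lattice h₁ h₂ hw z

lemma apply_eq_apply_of_differentiable_of_periodic {f : ℂ → ℂ} (hf : Differentiable ℂ f)
    (h₁ : Periodic f L.ω₁) (h₂ : Periodic f L.ω₂) (z w : ℂ) : f z = f w :=
  hf.apply_eq_apply_of_bounded (L.isCompact_range_of_periodic hf.continuous h₁ h₂).isBounded z w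

@[simps]
def ofIm (τ : ℂ) (hτ : τ.im ≠ 0) : PeriodPair where
  ω₁ := 1
  ω₂ := τ
  indep := LinearIndependent.pair_iff.mpr fun s t hst => by
    have ht : t = 0 := by simpa [hτ] using congrArg Complex.im hst
    subst ht
    simpa using hst

end PeriodPair

lemma dense_setOf_ne_zero {g : ℂ → ℂ} (hg : ∀ p, g p = 0 → deriv g p ≠ 0) :
    Dense {z | g z ≠ 0} := by
  refine interior_eq_empty_iff_dense_compl.mp (eq_empty_iff_forall_notMem.mpr fun p hp => ?_)
  have hzero : g =ᶠ[𝓝 p] fun _ => 0 := mem_interior_iff_mem_nhds.mp hp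
  exact hg p hzero.eq_of_nhds (by rw [hzero.deriv_eq, deriv_const])

lemma exists_differentiable_eq_div {f g : ℂ → ℂ} (hf : Differentiable ℂ f)
    (hg : Differentiable ℂ g) (hfg : ∀ p, g p = 0 → f p = 0 ∧ deriv g p ≠ 0) :
    ∃ H : ℂ → ℂ, Differentiable ℂ H ∧ ∀ z, g z ≠ 0 → H z = f z / g z := by
  classical
  refine ⟨fun z => if g z = 0 then deriv f z / deriv g z else f z / g z, fun p => ?_,
    fun z hz => if_neg hz⟩
  by_cases hp : g p = 0
  · -- near a zero `p`, `f / g = dslope f p / dslope g p`, and `dslope g p p = g' p ≠ 0`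
    obtain ⟨hfp, hg'p⟩ := hfg p hp
    have hdslope : ∀ {φ : ℂ → ℂ}, Differentiable ℂ φ → DifferentiableAt ℂ (dslope φ p) p :=
      fun hφ => ((differentiableOn_dslope univ_mem).mpr hφ.differentiableOn).differentiableAt
        univ_mem
    have hfactor : ∀ {φ : ℂ → ℂ}, φ p = 0 → ∀ z, φ z = (z - p) * dslope φ p z := fun hφ z => by
      rw [← smul_eq_mul, sub_smul_dslope, hφ, sub_zero]
    have hne : ∀ᶠ z in 𝓝 p, dslope g p z ≠ 0 :=
      (hdslope hg).continuousAt.eventually_ne (by rwa [dslope_same])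
    refine ((hdslope hf).div (hdslope hg) (by rwa [dslope_same])).congr_of_eventuallyEq ?_
    filter_upwards [hne] with z hz
    rcases eq_or_ne z p with rfl | hzp
    · simp [hp, dslope_same]
    · have hgz : g z ≠ 0 := by
        rw [hfactor hp]; exact mul_ne_zero (sub_ne_zero.mpr hzp) hz
      simp only [hgz, if_false]
      rw [hfactor hp z, hfactor hfp z, mul_div_mul_left _ _ (sub_ne_zero.mpr hzp)]
      rfl
  · refine (hf.differentiableAt.div hg.differentiableAt hp).congr_of_eventuallyEq ?_
    filter_upwards [hg.continuous.continuousAt.eventually_ne hp] with z hz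
    simp [hz]

lemma periodic_of_eq_div {f g H M : ℂ → ℂ} {c : ℂ} (hH : Continuous H)
    (hdense : Dense {z | g z ≠ 0}) (hHfg : ∀ z, g z ≠ 0 → H z = f z / g z) (hM : ∀ z, M z ≠ 0)
    (hf : ∀ z, f (z + c) = M z * f z) (hg : ∀ z, g (z + c) = M z * g z) : Periodic H c := by
  refine congrFun (Continuous.ext_on hdense (hH.comp (continuous_add_const c)) hH fun z hz => ?_)
  have hgc : g (z + c) ≠ 0 := by rw [hg]; exact mul_ne_zero (hM z) hz
  rw [hHfg _ hgc, hHfg _ hz, hf, hg, mul_div_mul_left _ _ (hM z)]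

lemma PeriodPair.exists_eq_const_mul (L : PeriodPair) {f g M₁ M₂ : ℂ → ℂ}
    (hf : Differentiable ℂ f) (hg : Differentiable ℂ g)
    (hM₁ : ∀ z, M₁ z ≠ 0) (hM₂ : ∀ z, M₂ z ≠ 0)
    (hf₁ : ∀ z, f (z + L.ω₁) = M₁ z * f z) (hg₁ : ∀ z, g (z + L.ω₁) = M₁ z * g z)
    (hf₂ : ∀ z, f (z + L.ω₂) = M₂ z * f z) (hg₂ : ∀ z, g (z + L.ω₂) = M₂ z * g z)
    (hfg : ∀ p, g p = 0 → f p = 0 ∧ deriv g p ≠ 0) :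
    ∃ c, ∀ z, f z = c * g z := by
  obtain ⟨H, hH, hHfg⟩ := exists_differentiable_eq_div hf hg hfg
  have hdense := dense_setOf_ne_zero fun p hp => (hfg p hp).2
  have hconst := L.apply_eq_apply_of_differentiable_of_periodic hH
    (periodic_of_eq_div hH.continuous hdense hHfg hM₁ hf₁ hg₁)
    (periodic_of_eq_div hH.continuous hdense hHfg hM₂ hf₂ hg₂)
  refine ⟨H 0, fun z => ?_⟩
  by_cases hz : g z = 0
  · rw [(hfg z hz).1, hz, mul_zero]
  · rw [← hconst z, hHfg z hz, div_mul_cancel₀ _ hz]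

section QuasiPeriodic

variable {f μ : ℂ → ℂ} {c : ℂ}

lemma periodic_eq_zero_of_add_eq_mul (hμ : ∀ z, μ z ≠ 0) (hfc : ∀ z, f (z + c) = μ z * f z) :
    Periodic (fun z => f z = 0) c := fun z => by simp [hfc, hμ]

lemma deriv_add_eq_mul_of_eq_zero (hf : Differentiable ℂ f) (hμ : Differentiable ℂ μ)
    (hfc : ∀ z, f (z + c) = μ z * f z) {z : ℂ} (hz : f z = 0) :
    deriv f (z + c) = μ z * deriv f z := by
  rw [← deriv_comp_add_const, funext hfc, deriv_fun_mul (hμ z) (hf z), hz, mul_zero, zero_add]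

lemma periodic_deriv_ne_zero_of_eq_zero (hf : Differentiable ℂ f) (hμ : Differentiable ℂ μ)
    (hμ₀ : ∀ z, μ z ≠ 0) (hfc : ∀ z, f (z + c) = μ z * f z) :
    Periodic (fun z => f z = 0 → deriv f z ≠ 0) c := fun z =>
  propext <| imp_congr_ctx (by rw [hfc]; simp [hμ₀]) fun hz => by
    rw [deriv_add_eq_mul_of_eq_zero hf hμ hfc hz]; simp [hμ₀]

end QuasiPeriodic

lemma Function.Periodic.int_add_int_mul {α : Type*} {τ : ℂ} {P : ℂ → α} (h₁ : Periodic P 1)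
    (h₂ : Periodic P τ) (m n : ℤ) : Periodic P (m + n * τ) := by
  simpa using (h₁.int_mul m).add_period (h₂.int_mul n)

-- With this factor, `hper2` of `fay_trisecant` reads `θ (z + τ) = thetaFactor τ z * θ z`.
noncomputable def thetaFactor (τ z : ℂ) : ℂ :=
  -cexp (-(Real.pi : ℂ) * I * τ) * cexp (-2 * (Real.pi : ℂ) * I * z)

lemma thetaFactor_ne_zero (τ z : ℂ) : thetaFactor τ z ≠ 0 := by
  simp [thetaFactor, Complex.exp_ne_zero]

lemma differentiable_thetaFactor (τ : ℂ) : Differentiable ℂ (thetaFactor τ) := by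
  unfold thetaFactor; fun_prop

lemma thetaFactor_mul_thetaFactor {τ z w z' w' : ℂ} (h : z + w = z' + w') :
    thetaFactor τ z * thetaFactor τ w = thetaFactor τ z' * thetaFactor τ w' := by
  have key : ∀ u v, thetaFactor τ u * thetaFactor τ v
      = cexp (-(Real.pi : ℂ) * I * τ) ^ 2 * cexp (-2 * (Real.pi : ℂ) * I * (u + v)) := by
    intro u v
    simp only [thetaFactor, mul_add, Complex.exp_add]
    ring
  rw [key, key, h]

section Theta

variable {τ : ℂ} {θ : ℂ → ℂ}

lemma theta_zero (hodd : ∀ z, θ (-z) = -θ z) : θ 0 = 0 :=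
  self_eq_neg.mp (by simpa using hodd 0)

lemma deriv_theta_ne_zero (hθ : Differentiable ℂ θ) (hnorm : deriv θ 0 ≠ 0)
    (hzero : ∀ z, θ z = 0 ↔ ∃ m n : ℤ, z = (m : ℂ) + (n : ℂ) * τ)
    (hper1 : ∀ z, θ (z + 1) = -θ z) (hper2 : ∀ z, θ (z + τ) = thetaFactor τ z * θ z)
    {p : ℂ} (hp : θ p = 0) : deriv θ p ≠ 0 := by
  obtain ⟨m, n, rfl⟩ := (hzero p).mp hp
  have h₁ := periodic_deriv_ne_zero_of_eq_zero hθ (differentiable_const (-1 : ℂ))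
    (fun _ => by norm_num) fun z => by rw [hper1, neg_one_mul]
  have h₂ := periodic_deriv_ne_zero_of_eq_zero hθ (differentiable_thetaFactor τ)
    (thetaFactor_ne_zero τ) hper2
  have hP := (h₁.int_add_int_mul h₂ m n) 0
  rw [zero_add] at hP
  exact hP.to_iff.mpr (fun _ => hnorm) hp

lemma theta_sub_eq_zero (hzero : ∀ z, θ z = 0 ↔ ∃ m n : ℤ, z = (m : ℂ) + (n : ℂ) * τ)
    {z w : ℂ} (hz : θ z = 0) (hw : θ w = 0) : θ (w - z) = 0 := by
  obtain ⟨m, n, rfl⟩ := (hzero z).mp hz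
  obtain ⟨m', n', rfl⟩ := (hzero w).mp hw
  exact (hzero _).mpr ⟨m' - m, n' - n, by push_cast; ring⟩

lemma deriv_theta_mul_theta_ne_zero (hθ : Differentiable ℂ θ)
    (hzero : ∀ z, θ z = 0 ↔ ∃ m n : ℤ, z = (m : ℂ) + (n : ℂ) * τ)
    (hsimple : ∀ p, θ p = 0 → deriv θ p ≠ 0) {s p : ℂ} (hs : θ s ≠ 0)
    (hp : θ (p + s) * θ p = 0) : deriv (fun z => θ (z + s) * θ z) p ≠ 0 := by
  rw [deriv_fun_mul (by fun_prop : DifferentiableAt ℂ (fun z => θ (z + s)) p) (hθ p),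
    deriv_comp_add_const]
  rcases mul_eq_zero.mp hp with hps | hp₀
  · have hp₀ : θ p ≠ 0 := fun hp₀ => hs (by simpa using theta_sub_eq_zero hzero hp₀ hps)
    simpa [hps] using mul_ne_zero (hsimple _ hps) hp₀
  · have hps : θ (p + s) ≠ 0 := fun hps => hs (by simpa using theta_sub_eq_zero hzero hp₀ hps)
    simpa [hp₀] using mul_ne_zero hps (hsimple _ hp₀)

theorem exists_eq_const_mul_theta_mul_theta (hτ : τ.im ≠ 0) (hθ : Differentiable ℂ θ)
    (hzero : ∀ z, θ z = 0 ↔ ∃ m n : ℤ, z = (m : ℂ) + (n : ℂ) * τ)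
    (hsimple : ∀ p, θ p = 0 → deriv θ p ≠ 0)
    (hper1 : ∀ z, θ (z + 1) = -θ z) (hper2 : ∀ z, θ (z + τ) = thetaFactor τ z * θ z)
    {s : ℂ} (hs : θ s ≠ 0) {f : ℂ → ℂ} (hf : Differentiable ℂ f) (hf₁ : ∀ z, f (z + 1) = f z)
    (hfτ : ∀ z, f (z + τ) = thetaFactor τ (z + s) * thetaFactor τ z * f z)
    (hf₀ : f 0 = 0) (hfs : f (-s) = 0) :
    ∃ c, ∀ z, f z = c * (θ (z + s) * θ z) := by
  have hfactor : ∀ z, thetaFactor τ (z + s) * thetaFactor τ z ≠ 0 := fun z =>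
    mul_ne_zero (thetaFactor_ne_zero τ _) (thetaFactor_ne_zero τ z)
  have hzero₁ : Periodic (fun z => f z = 0) 1 := fun z => by simp only [hf₁]
  have hzeroτ := periodic_eq_zero_of_add_eq_mul hfactor hfτ
  have hfzero (m n : ℤ) (z : ℂ) : f (z + (m + n * τ)) = 0 ↔ f z = 0 :=
    ((hzero₁.int_add_int_mul hzeroτ m n) z).to_iff
  refine (PeriodPair.ofIm τ hτ).exists_eq_const_mul hf (by fun_prop) (M₁ := fun _ => 1)
    (fun _ => one_ne_zero) hfactor (by simpa using hf₁)
    (fun z => by simp [add_right_comm z 1, hper1]) (by simpa using hfτ)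
    (fun z => by simp only [PeriodPair.ofIm_ω₂, add_right_comm z τ, hper2]; ring) fun p hp =>
      ⟨?_, deriv_theta_mul_theta_ne_zero hθ hzero hsimple hs hp⟩
  rcases mul_eq_zero.mp hp with hps | hp₀
  · obtain ⟨m, n, hmn⟩ := (hzero _).mp hps
    simpa [show -s + (m + n * τ) = p by linear_combination -hmn, hfs] using hfzero m n (-s)
  · obtain ⟨m, n, rfl⟩ := (hzero _).mp hp₀
    simpa [hf₀] using hfzero m n 0

theorem theta_trisecant_cleared_of_ne_zero (hτ : τ.im ≠ 0) (hθ : Differentiable ℂ θ)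
    (hodd : ∀ z, θ (-z) = -θ z) (hzero : ∀ z, θ z = 0 ↔ ∃ m n : ℤ, z = (m : ℂ) + (n : ℂ) * τ)
    (hsimple : ∀ p, θ p = 0 → deriv θ p ≠ 0)
    (hper1 : ∀ z, θ (z + 1) = -θ z) (hper2 : ∀ z, θ (z + τ) = thetaFactor τ z * θ z)
    {a y : ℂ} (ha : θ a ≠ 0) (hy : θ y ≠ 0) (hay : θ (a - y) ≠ 0) (b x : ℂ) :
    θ (x + a) * θ (x - y) * (θ (y + b) * θ (a + b))
      = θ (x + (a + b)) * θ (x - y - b) * (θ y * θ a)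
        + θ (x - y + a) * θ x * (θ (y + (a + b)) * θ b) := by
  -- each `u`-dependent factor is some `θ (u + s)`, and in every product the two `s` sum to `a - y`
  set F : ℂ → ℂ := fun u => θ (u + a) * θ (u - y) * (θ (y + b) * θ (a + b))
      - θ (u + (a + b)) * θ (u - y - b) * (θ y * θ a)
      - θ (u - y + a) * θ u * (θ (y + (a + b)) * θ b) with hF
  have hodd' : ∀ z w, z = -w → θ z = -θ w := fun z w h => h ▸ hodd w
  have hθ₀ := theta_zero hodd
  have hF₁ : ∀ u, F (u + 1) = F u := fun u => by
    simp only [hF, add_right_comm _ (1 : ℂ), add_sub_right_comm _ (1 : ℂ), hper1]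
    ring
  have hFτ : ∀ u, F (u + τ) = thetaFactor τ (u + (a - y)) * thetaFactor τ u * F u := fun u => by
    have hfactor : ∀ z w, z + w = u + (a - y) + u →
        thetaFactor τ z * thetaFactor τ w = thetaFactor τ (u + (a - y)) * thetaFactor τ u :=
      fun z w h => thetaFactor_mul_thetaFactor h
    simp only [hF, add_right_comm _ τ, add_sub_right_comm _ τ, hper2]
    linear_combination
      θ (u + a) * θ (u - y) * (θ (y + b) * θ (a + b)) * hfactor (u + a) (u - y) (by ring)
        - θ (u + (a + b)) * θ (u - y - b) * (θ y * θ a)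
          * hfactor (u + (a + b)) (u - y - b) (by ring)
        - θ (u - y + a) * θ u * (θ (y + (a + b)) * θ b) * hfactor (u - y + a) u (by ring)
  have hF₀ : F 0 = 0 := by
    simp only [hF, hodd' (0 - y) y (by ring), hodd' (0 - y - b) (y + b) (by ring), hθ₀,
      zero_add]
    ring
  have hFs : F (-(a - y)) = 0 := by
    simp only [hF, hodd' (-(a - y) - y) a (by ring), hodd' (-(a - y) - y - b) (a + b) (by ring),
      show -(a - y) - y + a = 0 by ring, show -(a - y) + a = y by ring,
      show -(a - y) + (a + b) = y + b by ring, hθ₀]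
    ring
  obtain ⟨c, hc⟩ := exists_eq_const_mul_theta_mul_theta hτ hθ hzero hsimple hper1 hper2 hay
    (by fun_prop) hF₁ hFτ hF₀ hFs
  have hc₀ : c = 0 := by
    have hFy : F y = 0 := by
      simp only [hF, sub_self, zero_sub, zero_add, hodd, hθ₀]
      ring
    simpa [hFy, ha, hy] using hc y
  linear_combination (by simpa [hc₀] using hc x : F x = 0)

theorem theta_trisecant_cleared (hτ : τ.im ≠ 0) (hθ : Differentiable ℂ θ)
    (hodd : ∀ z, θ (-z) = -θ z) (hzero : ∀ z, θ z = 0 ↔ ∃ m n : ℤ, z = (m : ℂ) + (n : ℂ) * τ)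
    (hsimple : ∀ p, θ p = 0 → deriv θ p ≠ 0)
    (hper1 : ∀ z, θ (z + 1) = -θ z) (hper2 : ∀ z, θ (z + τ) = thetaFactor τ z * θ z)
    {y : ℂ} (hy : θ y ≠ 0) (a b x : ℂ) :
    θ (x + a) * θ (x - y) * (θ (y + b) * θ (a + b))
      = θ (x + (a + b)) * θ (x - y - b) * (θ y * θ a)
        + θ (x - y + a) * θ x * (θ (y + (a + b)) * θ b) := by
  have hdense : Dense ({c | θ c ≠ 0} ∩ {c | θ (c - y) ≠ 0}) :=
    (dense_setOf_ne_zero hsimple).inter_of_isOpen_left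
      (dense_setOf_ne_zero fun p hp => by rw [deriv_comp_sub_const]; exact hsimple _ hp)
      (isOpen_ne_fun hθ.continuous continuous_const)
  have hθc := hθ.continuous
  refine congrFun (Continuous.ext_on hdense (by fun_prop) (by fun_prop) fun c hc =>
    theta_trisecant_cleared_of_ne_zero hτ hθ hodd hzero hsimple hper1 hper2 hc.1 hy hc.2 b x) a

end Theta

theorem fay_trisecant_general (τ : ℂ) (hτ : 0 < τ.im) (θ : ℂ → ℂ)
    (hθ : Differentiable ℂ θ)
    (hodd : ∀ z, θ (-z) = -θ z)
    (hnorm : deriv θ 0 = 1)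
    (hzero : ∀ z, θ z = 0 ↔ ∃ m n : ℤ, z = (m : ℂ) + (n : ℂ) * τ)
    (hper1 : ∀ z, θ (z + 1) = -θ z)
    (hper2 : ∀ z, θ (z + τ)
      = -Complex.exp (-(Real.pi : ℂ) * Complex.I * τ)
          * Complex.exp (-2 * (Real.pi : ℂ) * Complex.I * z) * θ z)
    (a b x y : ℂ)
    (ha : θ a ≠ 0) (hb : θ b ≠ 0) (hab : θ (a + b) ≠ 0)
    (hx : θ x ≠ 0) (hy : θ y ≠ 0) (hxy : θ (x - y) ≠ 0) :
    kroneckerS θ a x * kroneckerS θ b y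
      = kroneckerS θ a (x - y) * kroneckerS θ (a + b) y
        + kroneckerS θ (a + b) x * kroneckerS θ b (y - x) := by
  have hsimple : ∀ p, θ p = 0 → deriv θ p ≠ 0 := fun _ =>
    deriv_theta_ne_zero hθ (hnorm ▸ one_ne_zero) hzero hper1 hper2
  have key := theta_trisecant_cleared hτ.ne' hθ hodd hzero hsimple hper1 hper2 hy a b x
  simp only [kroneckerS]
  rw [show y - x = -(x - y) by ring, hodd, show -(x - y) + b = -(x - y - b) by ring, hodd]
  field_simp
  linear_combination key

/-- Fay's trisecant identity for the Kronecker theta function: with `θ` the odd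
Jacobi theta function for `τ` in the upper half-plane, normalized by `θ'(0) = 1`,
entire, with zeros exactly on `Λ_τ = ℤ ⊕ ℤτ`, and satisfying `θ(z+1) = -θ(z)` and
`θ(z+τ) = -e^{-πiτ} e^{-2πiz} θ(z)`, one has
`S_a(x)·S_b(y) = S_a(x-y)·S_{a+b}(y) + S_{a+b}(x)·S_b(y-x)` wherever all the
denominators are nonzero. -/
theorem fay_trisecant (τ : ℂ) (hτ : 0 < τ.im) (θ : ℂ → ℂ)
    (hθ : Differentiable ℂ θ)
    (hodd : ∀ z, θ (-z) = -θ z)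
    (hnorm : deriv θ 0 = 1)
    (hzero : ∀ z, θ z = 0 ↔ ∃ m n : ℤ, z = (m : ℂ) + (n : ℂ) * τ)
    (hper1 : ∀ z, θ (z + 1) = -θ z)
    (hper2 : ∀ z, θ (z + τ)
      = -Complex.exp (-(Real.pi : ℂ) * Complex.I * τ)
          * Complex.exp (-2 * (Real.pi : ℂ) * Complex.I * z) * θ z)
    (a b x y : ℂ)
    (ha : θ a ≠ 0) (hb : θ b ≠ 0) (hab : θ (a + b) ≠ 0)
    (hx : θ x ≠ 0) (hy : θ y ≠ 0) (hxy : θ (x - y) ≠ 0) (hyx : θ (y - x) ≠ 0) :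
    kroneckerS θ a x * kroneckerS θ b y
      = kroneckerS θ a (x - y) * kroneckerS θ (a + b) y
        + kroneckerS θ (a + b) x * kroneckerS θ b (y - x) :=
  fay_trisecant_general τ hτ θ hθ hodd hnorm hzero hper1 hper2 a b x y ha hb hab hx hy hxy
end
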